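/- Fix n > 0 and 0 ≤ κ₀ < 1, and set a = 1 − √κ₀ ∈ (0,1]. For real s > 0 define Θ(s) = (1/2)·(1 + n·a/s)^{−2s}, and let H₂ denote the binary Shannon entropy. Then: (i) Θ(s) ∈ (0, 1/2] for all s > 0; (ii) Θ is strictly decreasing on (0, ∞); and consequently (iii) the guaranteed information Q(s) = 1 − H₂(Θ(s)) is strictly increasing in s, so for all integers 1 ≤ s ≤ s′ one has Q(1) ≤ Q(s) ≤ Q(s′). -/

import Mathlib

/-
Write `Θ(s) = ½ exp(−2 g(s))` with `g(s) = s log(1 + c/s)` and `c = n a > 0`. Substituting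
`x = 1 + c/s` gives `g(s) = c · log x / (x − 1)`, a secant slope of the strictly concave `log`
from the point `1`; it increases as `x` decreases, i.e. as `s` increases. Hence `Θ` strictly
decreases from below `½`, and `Q = 1 − H₂ ∘ Θ` strictly increases because `H₂` strictly
increases on `[0, ½]`.
-/

open Real

/-- The binary Shannon entropy `H₂(x) = −x log₂ x − (1−x) log₂(1−x)`
(with the convention `0·log₂ 0 = 0`, automatic since `logb 2 0 = 0`). -/
noncomputable def binEnt (x : ℝ) : ℝ := -x * Real.logb 2 x - (1 - x) * Real.logb 2 (1 - x)

open Set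

lemma binEnt_eq_binEntropy_div_log_two (x : ℝ) : binEnt x = binEntropy x / log 2 := by
  simp only [binEnt, binEntropy, logb, log_inv]
  ring

lemma binEnt_strictMonoOn : StrictMonoOn binEnt (Icc 0 2⁻¹) := by
  intro x hx y hy hxy
  simp only [binEnt_eq_binEntropy_div_log_two]
  exact div_lt_div_of_pos_right (binEntropy_strictMonoOn hx hy hxy) (log_pos one_lt_two)

lemma log_div_sub_one_lt_of_lt {x y : ℝ} (hx : 1 < x) (hxy : x < y) :
    log y / (y - 1) < log x / (x - 1) := by
  have h := strictConcaveOn_log_Ioi.secant_strict_mono (a := 1) (mem_Ioi.2 one_pos)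
    (zero_lt_one.trans hx) (zero_lt_one.trans (hx.trans hxy)) hx.ne' (hx.trans hxy).ne' hxy
  simpa only [log_one, sub_zero] using h

section ErrorBound

variable {c : ℝ}

lemma mul_log_one_add_div_pos (hc : 0 < c) {s : ℝ} (hs : 0 < s) : 0 < s * log (1 + c / s) :=
  mul_pos hs (log_pos (lt_add_of_pos_right 1 (div_pos hc hs)))

lemma strictMonoOn_mul_log_one_add_div (hc : 0 < c) :
    StrictMonoOn (fun s => s * log (1 + c / s)) (Ioi 0) := by
  intro s (hs : 0 < s) t (ht : 0 < t) hst
  have slope_form : ∀ u : ℝ, 0 < u →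
      u * log (1 + c / u) = c * (log (1 + c / u) / (1 + c / u - 1)) := by
    intro u hu
    rw [add_sub_cancel_left]
    field_simp
  dsimp only
  rw [slope_form s hs, slope_form t ht]
  refine mul_lt_mul_of_pos_left (log_div_sub_one_lt_of_lt ?_ ?_) hc
  · exact lt_add_of_pos_right 1 (div_pos hc ht)
  · exact add_lt_add_right (div_lt_div_of_pos_left hc hs hst) 1

/-- The paper's `Θ(s)` as a function of `c = n (1 − √κ₀)`. -/
noncomputable def eprErrorBound (c s : ℝ) : ℝ := 1 / 2 * (1 + c / s) ^ (-(2 * s))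

lemma eprErrorBound_eq_exp (hc : 0 < c) {s : ℝ} (hs : 0 < s) :
    eprErrorBound c s = 1 / 2 * exp (-2 * (s * log (1 + c / s))) := by
  rw [eprErrorBound, rpow_def_of_pos (by positivity)]
  ring_nf

lemma eprErrorBound_pos (hc : 0 < c) {s : ℝ} (hs : 0 < s) : 0 < eprErrorBound c s := by
  rw [eprErrorBound_eq_exp hc hs]
  positivity

lemma eprErrorBound_le_half (hc : 0 < c) {s : ℝ} (hs : 0 < s) : eprErrorBound c s ≤ 1 / 2 := by
  rw [eprErrorBound_eq_exp hc hs]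
  have := mul_log_one_add_div_pos hc hs
  have : exp (-2 * (s * log (1 + c / s))) ≤ 1 := exp_le_one_iff.mpr (by linarith)
  linarith

lemma eprErrorBound_strictAntiOn (hc : 0 < c) : StrictAntiOn (eprErrorBound c) (Ioi 0) := by
  intro s hs t ht hst
  rw [eprErrorBound_eq_exp hc hs, eprErrorBound_eq_exp hc ht]
  have := strictMonoOn_mul_log_one_add_div hc hs ht hst
  exact mul_lt_mul_of_pos_left (exp_lt_exp.2 (by linarith)) one_half_pos

end ErrorBound

lemma StrictAntiOn.one_sub_binEnt_comp {f : ℝ → ℝ} {S : Set ℝ} (hf : StrictAntiOn f S)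
    (hmaps : MapsTo f S (Icc 0 2⁻¹)) : StrictMonoOn (fun x => 1 - binEnt (f x)) S := by
  intro x hx y hy hxy
  have := binEnt_strictMonoOn (hmaps hy) (hmaps hx) (hf hx hy hxy)
  simp only
  linarith

theorem stmt8_general (n : ℝ) (hn : 0 < n) (κ₀ : ℝ) (h₀' : κ₀ < 1)
    (a : ℝ) (ha : a = 1 - Real.sqrt κ₀)
    (Θ Q : ℝ → ℝ)
    (hΘ : ∀ s : ℝ, Θ s = (1 / 2) * (1 + n * a / s) ^ (-(2 * s)))
    (hQ : ∀ s : ℝ, Q s = 1 - binEnt (Θ s)) :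
    (∀ s : ℝ, 0 < s → 0 < Θ s ∧ Θ s ≤ 1 / 2) ∧
    StrictAntiOn Θ (Set.Ioi (0 : ℝ)) ∧
    StrictMonoOn Q (Set.Ioi (0 : ℝ)) ∧
    (∀ s s' : ℕ, 1 ≤ s → s ≤ s' →
      Q 1 ≤ Q (s : ℝ) ∧ Q (s : ℝ) ≤ Q (s' : ℝ)) := by
  have hc : 0 < n * a := mul_pos hn (by rw [ha, sub_pos, sqrt_lt' one_pos, one_pow]; exact h₀')
  obtain rfl : Θ = eprErrorBound (n * a) := funext hΘ
  obtain rfl : Q = fun s => 1 - binEnt (eprErrorBound (n * a) s) := funext hQ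
  have hbounds (s : ℝ) (hs : 0 < s) :=
    And.intro (eprErrorBound_pos hc hs) (eprErrorBound_le_half hc hs)
  have hanti := eprErrorBound_strictAntiOn hc
  have hmono := hanti.one_sub_binEnt_comp fun s hs =>
    ⟨(hbounds s hs).1.le, (hbounds s hs).2.trans_eq (one_div 2)⟩
  refine ⟨hbounds, hanti, hmono, fun s s' hs hss' => ?_⟩
  have hpos : ∀ m : ℕ, 1 ≤ m → (m : ℝ) ∈ Ioi 0 := fun m hm => by
    simp only [mem_Ioi, Nat.cast_pos]; omega
  exact ⟨hmono.monotoneOn (by norm_num) (hpos s hs) (by exact_mod_cast hs),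
    hmono.monotoneOn (hpos s hs) (hpos s' (hs.trans hss')) (by exact_mod_cast hss')⟩

/-- For an ideal binary memory read by the EPR transmitter `ρ_epr(s,s,n)`, the error
bound `Θ(s) = (1/2)(1 + na/s)^{−2s}` (with `a = 1 − √κ₀`) lies in `(0, 1/2]`, is
strictly decreasing in `s`, and hence the guaranteed information
`Q(s) = 1 − H₂(Θ(s))` is strictly increasing in `s`; in particular
`Q(1) ≤ Q(s) ≤ Q(s′)` for integers `1 ≤ s ≤ s′`. -/
theorem stmt8 (n : ℝ) (hn : 0 < n) (κ₀ : ℝ) (h₀ : 0 ≤ κ₀) (h₀' : κ₀ < 1)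
    (a : ℝ) (ha : a = 1 - Real.sqrt κ₀)
    (Θ Q : ℝ → ℝ)
    (hΘ : ∀ s : ℝ, Θ s = (1 / 2) * (1 + n * a / s) ^ (-(2 * s)))
    (hQ : ∀ s : ℝ, Q s = 1 - binEnt (Θ s)) :
    (∀ s : ℝ, 0 < s → 0 < Θ s ∧ Θ s ≤ 1 / 2) ∧
    StrictAntiOn Θ (Set.Ioi (0 : ℝ)) ∧
    StrictMonoOn Q (Set.Ioi (0 : ℝ)) ∧
    (∀ s s' : ℕ, 1 ≤ s → s ≤ s' →
      Q 1 ≤ Q (s : ℝ) ∧ Q (s : ℝ) ≤ Q (s' : ℝ)) :=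
  stmt8_general n hn κ₀ h₀' a ha Θ Q hΘ hQ
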